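/- arXiv:2604.00499 — 3 statements merged into one kernel-verified Lean document; each statement's English description precedes it below -/
import Mathlib

section
/- Let f : (0,1) → [0,∞) be measurable with f(p)/p^{α-1} → c as p → 0+ for constants c, α > 0, and suppose f(p) ≤ M p^{α-1} on (0,δ) for some M > 0 and δ ∈ (0,1). Then n^α ∫_0^δ (1-p)^n f(p) dp → c·Γ(α) as n → ∞. -/
open MeasureTheory Filter Real Set

/-- If `f : (0,1) → [0,∞)` is measurable with `f(p)/p^(α-1) → c` as `p → 0⁺`
and `f p ≤ M p^(α-1)` on `(0,δ)`, then `n^α ∫_0^δ (1-p)^n f(p) dp → c · Γ(α)`. -/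
theorem tail_integral_I1_limit
    (f : ℝ → ℝ) (hf_meas : Measurable f)
    (hf_nonneg : ∀ p ∈ Ioo (0:ℝ) 1, 0 ≤ f p)
    (c α : ℝ) (hc : 0 < c) (hα : 0 < α)
    (hf_asymp : Tendsto (fun p => f p / p ^ (α - 1)) (nhdsWithin 0 (Ioi 0)) (nhds c))
    (M δ : ℝ) (hM : 0 < M) (hδ : δ ∈ Ioo (0:ℝ) 1)
    (hbound : ∀ p ∈ Ioo (0:ℝ) δ, f p ≤ M * p ^ (α - 1)) :
    Tendsto (fun n : ℕ => (n : ℝ) ^ α * ∫ p in Ioc (0:ℝ) δ, (1 - p) ^ n * f p)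
      atTop (nhds (c * Real.Gamma α)) := by
  obtain ⟨hδ0, hδ1⟩ := hδ
  set G : ℕ → ℝ → ℝ := fun n u =>
    Set.indicator (Ioo 0 ((n:ℝ) * δ))
      (fun u => (n:ℝ) ^ (α - 1) * ((1 - u / n) ^ n * f (u / n))) u with hG
  -- key: rescaling identity
  have key : ∀ n : ℕ, 1 ≤ n →
      (n : ℝ) ^ α * ∫ p in Ioc (0:ℝ) δ, (1 - p) ^ n * f p
        = ∫ u in Ioi (0:ℝ), G n u := by
    intro n hn
    have hn0 : (0:ℝ) < n := by exact_mod_cast hn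
    have hnδ : (0:ℝ) ≤ (n:ℝ) * δ := by positivity
    rw [hG]
    rw [integral_indicator measurableSet_Ioo, Measure.restrict_restrict measurableSet_Ioo,
      inter_eq_left.2 Ioo_subset_Ioi_self]
    rw [← integral_Ioc_eq_integral_Ioo,
      ← intervalIntegral.integral_of_le hnδ]
    have sub : (∫ u in (0:ℝ)..(n:ℝ) * δ, (1 - u / n) ^ n * f (u / n))
        = (n:ℝ) • ∫ p in (0:ℝ)..δ, (1 - p) ^ n * f p := by
      have := intervalIntegral.integral_comp_div (a := 0) (b := (n:ℝ) * δ)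
        (f := fun p => (1 - p) ^ n * f p) (ne_of_gt hn0)
      rw [this, zero_div, mul_comm ((n:ℝ)) δ, mul_div_assoc, div_self (ne_of_gt hn0), mul_one]
    have pull : (∫ u in (0:ℝ)..(n:ℝ) * δ, (n:ℝ) ^ (α - 1) * ((1 - u / n) ^ n * f (u / n)))
        = (n:ℝ) ^ (α - 1) * ∫ u in (0:ℝ)..(n:ℝ) * δ, (1 - u / n) ^ n * f (u / n) := by
      exact intervalIntegral.integral_const_mul _ _
    rw [pull, sub, intervalIntegral.integral_of_le hδ0.le, smul_eq_mul, ← mul_assoc]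
    congr 1
    rw [← Real.rpow_add_one (ne_of_gt hn0) (α - 1)]
    norm_num
  -- limit of the rescaled integrals by dominated convergence
  have hGam : (Real.Gamma α) = ∫ u in Ioi (0:ℝ), Real.exp (-u) * u ^ (α - 1) :=
    Real.Gamma_eq_integral hα
  have hint : (∫ u in Ioi (0:ℝ), c * (Real.exp (-u) * u ^ (α - 1))) = c * Real.Gamma α := by
    rw [integral_const_mul, ← hGam]
  have main : Tendsto (fun n => ∫ u in Ioi (0:ℝ), G n u) atTop (nhds (c * Real.Gamma α)) := by
    rw [← hint]
    apply tendsto_integral_of_dominated_convergence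
      (bound := fun u => M * (Real.exp (-u) * u ^ (α - 1)))
    · intro n
      apply Measurable.aestronglyMeasurable
      apply Measurable.indicator _ measurableSet_Ioo
      fun_prop
    · exact ((Real.GammaIntegral_convergent hα).const_mul M)
    · intro n
      rw [ae_restrict_iff' measurableSet_Ioi]
      filter_upwards with u hu
      by_cases h : u ∈ Ioo (0:ℝ) ((n:ℝ) * δ)
      · have hn0 : (0:ℝ) < n := by
          by_contra hcon
          push_neg at hcon
          have : (n:ℝ) * δ ≤ 0 := mul_nonpos_of_nonpos_of_nonneg hcon hδ0.le
          exact absurd (h.1.trans h.2) (not_lt.2 this)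
        have hun : 0 < u / n := div_pos h.1 hn0
        have hunδ : u / n < δ := (div_lt_iff₀ hn0).2 (by linarith [h.2])
        have hf0 : 0 ≤ f (u / n) := hf_nonneg _ ⟨hun, hunδ.trans hδ1⟩
        have hfb : f (u / n) ≤ M * (u / n) ^ (α - 1) := hbound _ ⟨hun, hunδ⟩
        have h1 : (0:ℝ) ≤ 1 - u / n := by linarith
        have hexp : (1 - u / n) ^ n ≤ Real.exp (-u) := by
          have h2 : 1 - u / n ≤ Real.exp (-(u / n)) := by
            have := Real.add_one_le_exp (-(u / n)); linarith
          calc (1 - u / n) ^ n ≤ (Real.exp (-(u / n))) ^ n := pow_le_pow_left₀ h1 h2 n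
            _ = Real.exp (-u) := by
                rw [← Real.exp_nat_mul]
                congr 1
                field_simp
        rw [hG]
        simp only [Set.indicator_of_mem h]
        rw [Real.norm_of_nonneg (by positivity)]
        calc (n:ℝ) ^ (α - 1) * ((1 - u / n) ^ n * f (u / n))
            ≤ (n:ℝ) ^ (α - 1) * (Real.exp (-u) * (M * (u / n) ^ (α - 1))) := by
              gcongr
          _ = M * (Real.exp (-u) * u ^ (α - 1)) := by
              rw [Real.div_rpow (le_of_lt h.1) hn0.le]
              have hne : (n:ℝ) ^ (α - 1) ≠ 0 := by positivity
              field_simp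
      · rw [hG]
        simp only [Set.indicator_of_notMem h, norm_zero]
        have hu' : (0:ℝ) < u := hu
        positivity
    · rw [ae_restrict_iff' measurableSet_Ioi]
      filter_upwards with u hu
      have hu' : (0:ℝ) < u := hu
      -- eventually u < n * δ
      have hev : ∀ᶠ n : ℕ in atTop, u < (n:ℝ) * δ := by
        have : Tendsto (fun n : ℕ => (n:ℝ) * δ) atTop atTop :=
          (tendsto_natCast_atTop_atTop).atTop_mul_const hδ0
        exact this.eventually_gt_atTop u
      have hev1 : ∀ᶠ n : ℕ in atTop, 1 ≤ n := eventually_ge_atTop 1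
      -- the tendsto of the "nice" form
      have hdiv : Tendsto (fun n : ℕ => u / n) atTop (nhdsWithin 0 (Ioi 0)) := by
        apply tendsto_nhdsWithin_of_tendsto_nhds_of_eventually_within
        · exact tendsto_const_div_atTop_nhds_zero_nat u
        · filter_upwards [eventually_ge_atTop 1] with n hn
          have hn0 : (0:ℝ) < n := by exact_mod_cast hn
          exact div_pos hu' hn0
      have hA : Tendsto (fun n : ℕ => f (u / n) / (u / n) ^ (α - 1)) atTop (nhds c) :=
        hf_asymp.comp hdiv
      have hB : Tendsto (fun n : ℕ => (1 - u / n) ^ n) atTop (nhds (Real.exp (-u))) := by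
        have := Real.tendsto_one_add_div_pow_exp (-u)
        apply this.congr
        intro n
        congr 1
        ring
      have hq : Tendsto (fun n : ℕ => (f (u / n) / (u / n) ^ (α - 1)) *
          ((1 - u / n) ^ n * u ^ (α - 1))) atTop
          (nhds (c * (Real.exp (-u) * u ^ (α - 1)))) :=
        hA.mul (hB.mul tendsto_const_nhds)
      apply hq.congr'
      filter_upwards [hev, hev1] with n hn hn1
      have hn0 : (0:ℝ) < n := by exact_mod_cast hn1
      have hun : 0 < u / n := div_pos hu' hn0
      have hmem : u ∈ Ioo (0:ℝ) ((n:ℝ) * δ) := ⟨hu', hn⟩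
      rw [hG]
      simp only [Set.indicator_of_mem hmem]
      rw [Real.div_rpow hu'.le hn0.le]
      have h1 : (0:ℝ) < u ^ (α - 1) := by positivity
      have h2 : (0:ℝ) < (n:ℝ) ^ (α - 1) := by positivity
      field_simp
  apply main.congr'
  filter_upwards [eventually_ge_atTop 1] with n hn
  exact (key n hn).symm
end

section
/- Let p̃ be a random variable on (0,1) with density f satisfying f(p) ~ c·p^{α-1} as p → 0+ (i.e., f(p)/p^{α-1} → c) for constants c, α > 0, and assume f is bounded above by a constant multiple of p^{α-1} near 0. Define P(L > n) = ∫_0^1 (1-p)^n f(p) dp. Then P(L > n) ~ c·Γ(α)/n^α as n → ∞, i.e., n^α P(L > n) → c·Γ(α). -/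
open MeasureTheory Filter Real Set

/-- If `p̃` has density `f` on `(0,1)` with `f(p) ~ c·p^(α-1)` as `p → 0⁺`
and `f` bounded by a constant multiple of `p^(α-1)` near `0`, and
`P(L > n) = ∫_0^1 (1-p)^n f(p) dp`, then `n^α P(L > n) → c·Γ(α)`. -/
theorem mixture_tail_asymptotic
    (f : ℝ → ℝ) (hf_meas : Measurable f)
    (hf_nonneg : ∀ p ∈ Ioo (0:ℝ) 1, 0 ≤ f p)
    (hf_density : ∫ p in Ioo (0:ℝ) 1, f p = 1)
    (hf_int : IntegrableOn f (Ioo (0:ℝ) 1))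
    (c α : ℝ) (hc : 0 < c) (hα : 0 < α)
    (hf_asymp : Tendsto (fun p => f p / p ^ (α - 1)) (nhdsWithin 0 (Ioi 0)) (nhds c))
    (hf_bound : ∃ M > (0:ℝ), ∃ δ ∈ Ioo (0:ℝ) 1,
      ∀ p ∈ Ioo (0:ℝ) δ, f p ≤ M * p ^ (α - 1))
    (PL : ℕ → ℝ)
    (hPL : ∀ n, PL n = ∫ p in Ioo (0:ℝ) 1, (1 - p) ^ n * f p) :
    Tendsto (fun n : ℕ => (n : ℝ) ^ α * PL n) atTop (nhds (c * Real.Gamma α)) := by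
  obtain ⟨M, hM, δ, ⟨hδ0, hδ1⟩, hbd⟩ := hf_bound
  have hsub1 : Ioo (0:ℝ) δ ⊆ Ioo 0 1 := Ioo_subset_Ioo le_rfl hδ1.le
  have hsub2 : Ico δ (1:ℝ) ⊆ Ioo 0 1 := fun p hp => ⟨lt_of_lt_of_le hδ0 hp.1, hp.2⟩
  -- integrability of the integrand on (0,1)
  have hint : ∀ n : ℕ, IntegrableOn (fun p => (1 - p) ^ n * f p) (Ioo (0:ℝ) 1) := by
    intro n
    apply Integrable.bdd_mul (c := 1) hf_int
      ((continuous_const.sub continuous_id).pow n).aestronglyMeasurable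
    refine ae_restrict_of_forall_mem measurableSet_Ioo fun p hp => ?_
    obtain ⟨hp1, hp2⟩ := hp
    rw [Real.norm_eq_abs, Pi.pow_apply, Pi.sub_apply, abs_pow]
    apply pow_le_one₀ (abs_nonneg _)
    rw [abs_le]
    simp only [id_eq]
    constructor <;> linarith
  have hdisj : Disjoint (Ioo (0:ℝ) δ) (Ico δ 1) :=
    disjoint_left.mpr fun p h1 h2 => absurd h1.2 (not_lt.mpr h2.1)
  -- split the integral
  have hsplit : ∀ n : ℕ, ∫ p in Ioo (0:ℝ) 1, (1 - p) ^ n * f p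
      = (∫ p in Ioo (0:ℝ) δ, (1 - p) ^ n * f p) + ∫ p in Ico δ (1:ℝ), (1 - p) ^ n * f p := by
    intro n
    rw [← Ioo_union_Ico_eq_Ioo hδ0 hδ1.le]
    exact setIntegral_union hdisj measurableSet_Ico ((hint n).mono_set hsub1)
      ((hint n).mono_set hsub2)
  -- the rescaled integrand
  set F : ℕ → ℝ → ℝ := fun n t => (Ioo 0 ((n:ℝ)*δ)).indicator
      (fun t => (n:ℝ)^(α-1) * ((1 - t/n)^n * f (t/n))) t with hF
  have hFm : ∀ n : ℕ, AEStronglyMeasurable (F n) (volume.restrict (Ioi 0)) := by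
    intro n
    apply AEStronglyMeasurable.indicator _ measurableSet_Ioo
    exact (measurable_const.mul (((measurable_const.sub (measurable_id.div_const _)).pow_const n).mul
      (hf_meas.comp (measurable_id.div_const _)))).aestronglyMeasurable
  have hbound_int : Integrable (fun t => M * (Real.exp (-t) * t ^ (α-1)))
      (volume.restrict (Ioi 0)) := (Real.GammaIntegral_convergent hα).const_mul M
  -- dominating bound
  have hFbd : ∀ n : ℕ, ∀ᵐ t ∂(volume.restrict (Ioi 0)),
      ‖F n t‖ ≤ M * (Real.exp (-t) * t ^ (α-1)) := by
    intro n
    refine ae_restrict_of_forall_mem measurableSet_Ioi fun t ht => ?_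
    have ht0 : (0:ℝ) < t := ht
    have hbd_pos : 0 ≤ M * (Real.exp (-t) * t ^ (α-1)) :=
      mul_nonneg hM.le (mul_nonneg (Real.exp_nonneg _) (Real.rpow_nonneg ht0.le _))
    by_cases hmem : t ∈ Ioo 0 ((n:ℝ)*δ)
    · have hn0 : (0:ℝ) < n := by
        by_contra h
        push_neg at h
        have h2 := hmem.2
        nlinarith
      have hnne : (n:ℝ) ≠ 0 := hn0.ne'
      have htn : t / n ∈ Ioo (0:ℝ) δ :=
        ⟨div_pos ht0 hn0, (div_lt_iff₀ hn0).mpr (by linarith [hmem.2])⟩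
      have h1 : (0:ℝ) ≤ 1 - t/n := by linarith [htn.2, hδ1]
      have h2 : (1 - t/n)^n ≤ Real.exp (-t) := by
        calc (1 - t/n)^n ≤ (Real.exp (-(t/n)))^n := by
              apply pow_le_pow_left₀ h1
              linarith [Real.add_one_le_exp (-(t/n))]
          _ = Real.exp (-t) := by
              rw [← Real.exp_nat_mul]
              congr 1
              field_simp
      have h3 : f (t/n) ≤ M * (t/n)^(α-1) := hbd _ htn
      have h4 : 0 ≤ f (t/n) := hf_nonneg _ ⟨htn.1, htn.2.trans hδ1⟩
      have hnp : (0:ℝ) < (n:ℝ)^(α-1) := Real.rpow_pos_of_pos hn0 _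
      rw [hF]
      simp only [indicator_of_mem hmem]
      rw [Real.norm_eq_abs, abs_of_nonneg (mul_nonneg hnp.le (mul_nonneg (pow_nonneg h1 n) h4))]
      calc (n:ℝ)^(α-1) * ((1 - t/n)^n * f (t/n))
          ≤ (n:ℝ)^(α-1) * (Real.exp (-t) * (M * (t/n)^(α-1))) := by
            apply mul_le_mul_of_nonneg_left _ hnp.le
            exact mul_le_mul h2 h3 h4 (Real.exp_nonneg _)
        _ = M * (Real.exp (-t) * t^(α-1)) := by
            rw [Real.div_rpow ht0.le hn0.le]
            field_simp
    · rw [hF]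
      simp only [indicator_of_notMem hmem]
      simpa using hbd_pos
  -- pointwise limit
  have hFlim : ∀ᵐ t ∂(volume.restrict (Ioi 0)),
      Tendsto (fun n => F n t) atTop (nhds (c * (Real.exp (-t) * t ^ (α-1)))) := by
    refine ae_restrict_of_forall_mem measurableSet_Ioi fun t ht => ?_
    have ht0 : (0:ℝ) < t := ht
    have hdiv : Tendsto (fun n : ℕ => t / n) atTop (nhdsWithin 0 (Ioi 0)) := by
      rw [tendsto_nhdsWithin_iff]
      constructor
      · exact tendsto_const_div_atTop_nhds_zero_nat t
      · filter_upwards [eventually_gt_atTop 0] with n hn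
        exact div_pos ht0 (by exact_mod_cast hn)
    have h1 : Tendsto (fun n : ℕ => f (t/n) / (t/n)^(α-1)) atTop (nhds c) := hf_asymp.comp hdiv
    have h2 : Tendsto (fun n : ℕ => (1 - t/n)^n) atTop (nhds (Real.exp (-t))) := by
      have := Real.tendsto_one_add_div_pow_exp (-t)
      simpa [sub_eq_add_neg, neg_div] using this
    have h3 : Tendsto (fun n : ℕ => ((1 - t/n)^n * (f (t/n) / (t/n)^(α-1))) * t^(α-1)) atTop
        (nhds ((Real.exp (-t) * c) * t^(α-1))) := (h2.mul h1).mul tendsto_const_nhds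
    have heq : ∀ᶠ n : ℕ in atTop,
        ((1 - t/n)^n * (f (t/n) / (t/n)^(α-1))) * t^(α-1) = F n t := by
      filter_upwards [tendsto_natCast_atTop_atTop.eventually_gt_atTop (t/δ),
        eventually_gt_atTop 0] with n hn hn0'
      have hn0 : (0:ℝ) < n := by exact_mod_cast hn0'
      have hmem : t ∈ Ioo 0 ((n:ℝ)*δ) := ⟨ht0, by
        have := (div_lt_iff₀ hδ0).mp hn
        linarith⟩
      have htn0 : (0:ℝ) < t/n := div_pos ht0 hn0
      have hpow : (0:ℝ) < (t/n)^(α-1) := Real.rpow_pos_of_pos htn0 _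
      have hne := hpow.ne'
      have key : (n:ℝ)^(α-1) * (t/n)^(α-1) = t^(α-1) := by
        rw [← Real.mul_rpow hn0.le htn0.le]
        congr 1
        field_simp
      rw [hF]
      simp only [indicator_of_mem hmem]
      rw [← key]
      field_simp
    have hcomm : (Real.exp (-t) * c) * t^(α-1) = c * (Real.exp (-t) * t ^ (α-1)) := by ring
    rw [hcomm] at h3
    exact Tendsto.congr' heq h3
  -- dominated convergence
  have hmain : Tendsto (fun n : ℕ => ∫ t in Ioi (0:ℝ), F n t) atTop
      (nhds (c * Real.Gamma α)) := by
    have h := tendsto_integral_of_dominated_convergence _ hFm hbound_int hFbd hFlim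
    have hlim_eq : ∫ t in Ioi (0:ℝ), c * (Real.exp (-t) * t^(α-1)) = c * Real.Gamma α := by
      rw [integral_const_mul, Real.Gamma_eq_integral hα]
    rwa [hlim_eq] at h
  -- identity between the rescaled integral and the main term
  have hE2 : ∀ n : ℕ, 1 ≤ n →
      (n:ℝ)^α * ∫ p in Ioo (0:ℝ) δ, (1 - p)^n * f p = ∫ t in Ioi (0:ℝ), F n t := by
    intro n hn
    have hn0 : (0:ℝ) < n := by exact_mod_cast hn
    have hIoo : ∫ p in Ioo (0:ℝ) δ, (1 - p)^n * f p
        = ∫ p in (0:ℝ)..δ, (1 - p)^n * f p := by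
      rw [intervalIntegral.integral_of_le hδ0.le, integral_Ioc_eq_integral_Ioo]
    have hsubst : ∫ t in (0:ℝ)..((n:ℝ)*δ), (1 - t/n)^n * f (t/n)
        = (n:ℝ) • ∫ p in (0:ℝ)..δ, (1 - p)^n * f p := by
      rw [intervalIntegral.integral_comp_div (fun p => (1 - p)^n * f p) hn0.ne']
      norm_num [mul_div_assoc, mul_comm ((n:ℝ)) δ, mul_div_cancel_right₀, hn0.ne']
    have hrw : (n:ℝ)^α * ∫ p in Ioo (0:ℝ) δ, (1 - p)^n * f p
        = (n:ℝ)^(α-1) * ∫ t in (0:ℝ)..((n:ℝ)*δ), (1 - t/n)^n * f (t/n) := by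
      rw [hIoo, hsubst, smul_eq_mul, ← mul_assoc]
      congr 1
      rw [Real.rpow_sub hn0, Real.rpow_one, div_mul_cancel₀ _ hn0.ne']
    rw [hrw, ← intervalIntegral.integral_const_mul,
      intervalIntegral.integral_of_le (by positivity : (0:ℝ) ≤ (n:ℝ)*δ),
      integral_Ioc_eq_integral_Ioo, hF]
    rw [integral_indicator measurableSet_Ioo, Measure.restrict_restrict measurableSet_Ioo,
      inter_eq_self_of_subset_left Ioo_subset_Ioi_self]
  -- the tail term tends to 0
  have htail : Tendsto (fun n : ℕ => (n:ℝ)^α * ∫ p in Ico δ (1:ℝ), (1-p)^n * f p) atTop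
      (nhds 0) := by
    have hI : ∀ n : ℕ, 0 ≤ ∫ p in Ico δ (1:ℝ), (1-p)^n * f p := fun n =>
      setIntegral_nonneg measurableSet_Ico fun p hp =>
        mul_nonneg (pow_nonneg (by linarith [hp.2]) n) (hf_nonneg p (hsub2 hp))
    have hIle : ∀ n : ℕ, ∫ p in Ico δ (1:ℝ), (1-p)^n * f p ≤ (1-δ)^n := by
      intro n
      calc ∫ p in Ico δ (1:ℝ), (1-p)^n * f p
          ≤ ∫ p in Ico δ (1:ℝ), (1-δ)^n * f p := by
            apply setIntegral_mono_on ((hint n).mono_set hsub2)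
              ((hf_int.mono_set hsub2).const_mul _) measurableSet_Ico
            intro p hp
            apply mul_le_mul_of_nonneg_right _ (hf_nonneg p (hsub2 hp))
            exact pow_le_pow_left₀ (by linarith [hp.2]) (by linarith [hp.1]) n
        _ = (1-δ)^n * ∫ p in Ico δ (1:ℝ), f p := integral_const_mul _ _
        _ ≤ (1-δ)^n * ∫ p in Ioo (0:ℝ) 1, f p := by
            apply mul_le_mul_of_nonneg_left _ (pow_nonneg (by linarith) n)
            exact setIntegral_mono_set hf_int
              (ae_restrict_of_forall_mem measurableSet_Ioo hf_nonneg)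
              (HasSubset.Subset.eventuallyLE hsub2)
        _ = (1-δ)^n := by rw [hf_density, mul_one]
    have h0 : Tendsto (fun n : ℕ => (n:ℝ)^(⌈α⌉₊) * (1-δ)^n) atTop (nhds 0) :=
      tendsto_pow_const_mul_const_pow_of_lt_one _ (by linarith) (by linarith)
    apply squeeze_zero' (Eventually.of_forall fun n =>
      mul_nonneg (Real.rpow_nonneg (Nat.cast_nonneg n) _) (hI n)) _ h0
    filter_upwards [eventually_ge_atTop 1] with n hn
    have hn1 : (1:ℝ) ≤ n := by exact_mod_cast hn
    calc (n:ℝ)^α * ∫ p in Ico δ (1:ℝ), (1-p)^n * f p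
        ≤ (n:ℝ)^α * (1-δ)^n :=
          mul_le_mul_of_nonneg_left (hIle n) (Real.rpow_nonneg (by linarith) _)
      _ ≤ (n:ℝ)^(⌈α⌉₊:ℕ) * (1-δ)^n := by
          apply mul_le_mul_of_nonneg_right _ (pow_nonneg (by linarith) n)
          rw [← Real.rpow_natCast (n:ℝ) ⌈α⌉₊]
          exact Real.rpow_le_rpow_of_exponent_le hn1 (Nat.le_ceil α)
  -- conclusion
  have hsum : Tendsto (fun n : ℕ => (∫ t in Ioi (0:ℝ), F n t)
      + (n:ℝ)^α * ∫ p in Ico δ (1:ℝ), (1-p)^n * f p) atTop (nhds (c * Real.Gamma α)) := by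
    simpa using hmain.add htail
  apply Tendsto.congr' _ hsum
  filter_upwards [eventually_ge_atTop 1] with n hn
  rw [hPL n, hsplit n, mul_add, ← hE2 n hn]
end

section
/- If P(L > n) = ∫_0^1 (1-p)^n f(p) dp where f is a probability density on (0,1) with ∫_0^δ f(p) dp > 0 for every δ > 0, then for every λ > 0, e^{λn} P(L > n) → ∞ as n → ∞. -/
open MeasureTheory Filter Real Set

/-- If `P(L > n) = ∫_0^1 (1-p)^n f(p) dp` where `f` is a probability
density on `(0,1)` placing positive mass in every neighborhood of `0`, then for
every `λ > 0`, `e^(λn) P(L > n) → ∞`. -/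
theorem geometric_mixture_is_heavy_tailed
    (f : ℝ → ℝ) (hf_meas : Measurable f)
    (hf_nonneg : ∀ p ∈ Ioo (0:ℝ) 1, 0 ≤ f p)
    (hf_int : IntegrableOn f (Ioo (0:ℝ) 1))
    (hf_density : ∫ p in Ioo (0:ℝ) 1, f p = 1)
    (hf_pos : ∀ δ > (0:ℝ), 0 < ∫ p in Ioo (0:ℝ) δ, f p)
    (PL : ℕ → ℝ)
    (hPL : ∀ n, PL n = ∫ p in Ioo (0:ℝ) 1, (1 - p) ^ n * f p) :
    ∀ lam : ℝ, 0 < lam →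
      Tendsto (fun n : ℕ => Real.exp (lam * n) * PL n) atTop atTop := by
  intro lam hlam
  set δ : ℝ := (1 - Real.exp (-lam)) / 2 with hδ_def
  have hexp_lt : Real.exp (-lam) < 1 := by
    rw [Real.exp_lt_one_iff]; linarith
  have hexp_pos : 0 < Real.exp (-lam) := Real.exp_pos _
  have hδ_pos : 0 < δ := by simp only [hδ_def]; linarith
  have hδ_lt1 : δ < 1 := by simp only [hδ_def]; linarith
  have hδ_lt : δ < 1 - Real.exp (-lam) := by simp only [hδ_def]; linarith
  set c : ℝ := ∫ p in Ioo (0:ℝ) δ, f p with hc_def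
  have hc_pos : 0 < c := hf_pos δ hδ_pos
  have hsub : Ioo (0:ℝ) δ ⊆ Ioo (0:ℝ) 1 := Ioo_subset_Ioo le_rfl hδ_lt1.le
  -- integrability of (1-p)^n * f p on Ioo 0 1
  have hint : ∀ n : ℕ, IntegrableOn (fun p => (1 - p) ^ n * f p) (Ioo (0:ℝ) 1) := by
    intro n
    apply Integrable.bdd_mul (c := 1) hf_int
    · exact ((measurable_const.sub measurable_id).pow_const n).aestronglyMeasurable
    · filter_upwards [ae_restrict_mem measurableSet_Ioo] with p hp
      rw [Real.norm_eq_abs, abs_pow]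
      apply pow_le_one₀ (abs_nonneg _)
      rw [abs_le]; constructor <;> [linarith [hp.2]; linarith [hp.1]]
  -- key lower bound
  have hbound : ∀ n : ℕ, (1 - δ) ^ n * c ≤ PL n := by
    intro n
    rw [hPL n]
    have h1 : (1 - δ) ^ n * c = ∫ p in Ioo (0:ℝ) δ, (1 - δ) ^ n * f p := by
      rw [integral_const_mul]
    rw [h1]
    have hintδ : IntegrableOn (fun p => (1 - p) ^ n * f p) (Ioo (0:ℝ) δ) :=
      (hint n).mono_set hsub
    have step1 : ∫ p in Ioo (0:ℝ) δ, (1 - δ) ^ n * f p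
        ≤ ∫ p in Ioo (0:ℝ) δ, (1 - p) ^ n * f p := by
      apply setIntegral_mono_on ((hf_int.mono_set hsub).const_mul _) hintδ measurableSet_Ioo
      intro p hp
      apply mul_le_mul_of_nonneg_right _ (hf_nonneg p (hsub hp))
      exact pow_le_pow_left₀ (by linarith [hp.2, hδ_lt1]) (by linarith [hp.2]) n
    have step2 : ∫ p in Ioo (0:ℝ) δ, (1 - p) ^ n * f p
        ≤ ∫ p in Ioo (0:ℝ) 1, (1 - p) ^ n * f p := by
      apply setIntegral_mono_set (hint n)
      · filter_upwards [ae_restrict_mem measurableSet_Ioo] with p hp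
        exact mul_nonneg (pow_nonneg (by linarith [hp.2]) n) (hf_nonneg p hp)
      · exact HasSubset.Subset.eventuallyLE hsub
    linarith
  -- geometric growth
  have hr : 1 < Real.exp lam * (1 - δ) := by
    have : Real.exp (-lam) < 1 - δ := by linarith
    have h := mul_lt_mul_of_pos_left this (Real.exp_pos lam)
    rwa [← Real.exp_add, add_neg_cancel, Real.exp_zero] at h
  have htend : Tendsto (fun n : ℕ => (Real.exp lam * (1 - δ)) ^ n * c) atTop atTop :=
    (tendsto_pow_atTop_atTop_of_one_lt hr).atTop_mul_const hc_pos
  apply tendsto_atTop_mono _ htend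
  intro n
  have : Real.exp (lam * n) = (Real.exp lam) ^ n := by
    rw [← Real.exp_nat_mul]; ring_nf
  rw [mul_pow, this, mul_assoc]
  exact mul_le_mul_of_nonneg_left (hbound n) (pow_nonneg (Real.exp_pos _).le n)
end
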